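/- arXiv:2302.10424 — 3 statements merged into one kernel-verified Lean document; each statement's English description precedes it below -/
import Mathlib

section
/- Let n ∈ ℕ₊ and P(x) = min{x₁, x₂, …, x_n} for x ∈ ℝ^n. There exists a σ₁-NN φ of width 2n and depth n − 1 such that φ(x) = P(x) exactly for all x ∈ ℝ^n. -/
open MeasureTheory Set

noncomputable section

/-- The ReLU activation function. -/
def relu (x : ℝ) : ℝ := max x 0

/-- A σ₁-activation: exactly the ReLU function. -/
def IsSigma1 (σ : ℝ → ℝ) : Prop := σ = relu

/-- A σ₂-activation: σ_{a,b}(x) = a·max{x,0} + b·x·max{x,0} for some reals a, b. -/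
def IsSigma2 (σ : ℝ → ℝ) : Prop :=
  ∃ a b : ℝ, ∀ x, σ x = a * relu x + b * x * relu x

/-- `IsHiddenStack Act d N L k h` : `h` maps the input `x ∈ ℝ^d` to the output of the
`L`-th hidden layer (of width `k ≤ N`); each layer is an affine map followed by an
entrywise activation from the admissible family `Act`. -/
inductive IsHiddenStack (Act : (ℝ → ℝ) → Prop) (d N : ℕ) :
    (L : ℕ) → (k : ℕ) → ((Fin d → ℝ) → Fin k → ℝ) → Prop
  | zero : IsHiddenStack Act d N 0 d (fun x => x)
  | succ {L k k' : ℕ} {h : (Fin d → ℝ) → Fin k → ℝ}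
      (A : Matrix (Fin k') (Fin k) ℝ) (c : Fin k' → ℝ) (σ : Fin k' → ℝ → ℝ) :
      IsHiddenStack Act d N L k h → k' ≤ N → (∀ j, Act (σ j)) →
      IsHiddenStack Act d N (L + 1) k' (fun x j => σ j ((A.mulVec (h x) + c) j))

/-- A fully connected network with scalar output, input dimension `d`, hidden layers of
width at most `N`, depth (number of hidden layers) `L`, and activations from `Act`;
the final layer is affine with no activation. -/
def IsNN (Act : (ℝ → ℝ) → Prop) (d N L : ℕ) (f : (Fin d → ℝ) → ℝ) : Prop :=
  ∃ (k : ℕ) (h : (Fin d → ℝ) → Fin k → ℝ) (w : Fin k → ℝ) (c : ℝ),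
    IsHiddenStack Act d N L k h ∧ ∀ x, f x = (∑ j, w j * h x j) + c

lemma relu_of_nonneg {y : ℝ} (h : 0 ≤ y) : relu y = y := max_eq_left h
lemma relu_of_nonpos {y : ℝ} (h : y ≤ 0) : relu y = 0 := max_eq_right h

lemma sum_single_mul {m : ℕ} (a : Fin m) (c : ℝ) (v : Fin m → ℝ) :
    ∑ j, (Pi.single a c : Fin m → ℝ) j * v j = c * v a := by
  simp [Pi.single_apply, ite_mul, Finset.sum_ite_eq']

lemma relu_sub_relu_neg (y : ℝ) : relu y - relu (-y) = y := by
  rcases le_total 0 y with h | h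
  · rw [relu_of_nonneg h, relu_of_nonpos (by linarith)]; ring
  · rw [relu_of_nonpos h, relu_of_nonneg (by linarith)]; ring

lemma min_formula (a b : ℝ) :
    relu (a + b) / 2 - relu (-(a + b)) / 2 - relu (a - b) / 2 - relu (b - a) / 2
      = min a b := by
  have h1 := relu_sub_relu_neg (a + b)
  rcases le_total a b with h | h
  · rw [min_eq_left h, relu_of_nonpos (by linarith : a - b ≤ 0),
      relu_of_nonneg (by linarith : (0:ℝ) ≤ b - a)]
    linarith
  · rw [min_eq_right h, relu_of_nonneg (by linarith : (0:ℝ) ≤ a - b),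
      relu_of_nonpos (by linarith : b - a ≤ 0)]
    linarith

/-- Main induction: a stack of depth `t` from which `min` of the first `t+1`
coordinates and each later coordinate are affinely recoverable. -/
lemma min_stack (n : ℕ) (hn : 0 < n) : ∀ t, t < n →
    ∃ (k : ℕ) (h : (Fin n → ℝ) → Fin k → ℝ),
      IsHiddenStack IsSigma1 n (2 * n) t k h ∧
      (∃ (w : Fin k → ℝ) (c : ℝ), ∀ x,
        (∑ j, w j * h x j) + c =
          ((Finset.univ.filter fun i : Fin n => (i : ℕ) ≤ t).inf'
            ⟨⟨0, hn⟩, by simp⟩ x)) ∧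
      (∃ (W : Fin n → Fin k → ℝ) (C : Fin n → ℝ), ∀ s : Fin n, t < (s : ℕ) →
        ∀ x, (∑ j, W s j * h x j) + C s = x s) := by
  intro t
  induction t with
  | zero =>
    intro _
    refine ⟨n, fun x => x, IsHiddenStack.zero, ⟨Pi.single ⟨0, hn⟩ 1, 0, ?_⟩,
      ⟨fun s => Pi.single s 1, 0, ?_⟩⟩
    · intro x
      have hfe : (Finset.univ.filter fun i : Fin n => (i : ℕ) ≤ 0)
          = {(⟨0, hn⟩ : Fin n)} := by
        ext i
        simp [Fin.ext_iff, Nat.le_zero]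
      rw [sum_single_mul]
      refine Eq.trans ?_ (Finset.inf'_congr _ hfe (fun _ _ => rfl)).symm
      simp
    · intro s _ x
      rw [sum_single_mul]
      simp
  | succ t ih =>
    intro ht
    obtain ⟨k, h, stack, ⟨wm, cm, hm⟩, W, C, hW⟩ := ih (Nat.lt_of_succ_lt ht)
    have hn2 : 2 ≤ n := by omega
    set x1 : Fin n := ⟨t + 1, ht⟩ with hx1def
    have hx1rep : ∀ x, (∑ i, W x1 i * h x i) + C x1 = x x1 :=
      hW x1 (by simp [hx1def])
    -- per-pair affine data
    set u : Fin n → Fin k → ℝ := fun s i =>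
      if (s : ℕ) = 0 then wm i - W x1 i
      else if (s : ℕ) = 1 then wm i + W x1 i
      else if t + 1 < (s : ℕ) then W s i else 0 with hu_def
    set dd : Fin n → ℝ := fun s =>
      if (s : ℕ) = 0 then cm - C x1
      else if (s : ℕ) = 1 then cm + C x1
      else if t + 1 < (s : ℕ) then C s else 0 with hdd_def
    set sj : Fin (2 * n) → Fin n := fun j => ⟨(j : ℕ) / 2, by
      have := j.isLt; omega⟩ with hsj_def
    set sg : Fin (2 * n) → ℝ := fun j => if (j : ℕ) % 2 = 0 then 1 else -1
      with hsg_def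
    set A : Matrix (Fin (2 * n)) (Fin k) ℝ :=
      Matrix.of fun j i => sg j * u (sj j) i with hA_def
    set cv : Fin (2 * n) → ℝ := fun j => sg j * dd (sj j) with hcv_def
    have stack' : IsHiddenStack IsSigma1 n (2 * n) (t + 1) (2 * n)
        (fun x j => relu ((A.mulVec (h x) + cv) j)) :=
      IsHiddenStack.succ A cv (fun _ => relu) stack (le_refl _) (fun _ => rfl)
    set Mt : (Fin n → ℝ) → ℝ := fun x =>
      (Finset.univ.filter fun i : Fin n => (i : ℕ) ≤ t).inf'
        ⟨⟨0, hn⟩, by simp⟩ x with hMt_def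
    have hmrep : ∀ x, (∑ i, wm i * h x i) + cm = Mt x := hm
    -- value computed by each pair slot
    have hval : ∀ x (s : Fin n), (∑ i, u s i * h x i) + dd s =
        (if (s : ℕ) = 0 then Mt x - x x1
         else if (s : ℕ) = 1 then Mt x + x x1
         else if t + 1 < (s : ℕ) then x s else 0) := by
      intro x s
      by_cases h0 : (s : ℕ) = 0
      · simp only [hu_def, hdd_def, if_pos h0]
        have := hmrep x; have := hx1rep x
        simp only [sub_mul, Finset.sum_sub_distrib]
        linarith
      · by_cases h1 : (s : ℕ) = 1
        · simp only [hu_def, hdd_def, if_neg h0, if_pos h1]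
          have := hmrep x; have := hx1rep x
          simp only [add_mul, Finset.sum_add_distrib]
          linarith
        · by_cases h2 : t + 1 < (s : ℕ)
          · simp only [hu_def, hdd_def, if_neg h0, if_neg h1, if_pos h2]
            exact hW s (by omega) x
          · simp only [hu_def, hdd_def, if_neg h0, if_neg h1, if_neg h2]
            simp
    -- the layer output
    have hout : ∀ x (j : Fin (2 * n)),
        relu ((A.mulVec (h x) + cv) j) =
        relu (sg j * ((∑ i, u (sj j) i * h x i) + dd (sj j))) := by
      intro x j
      congr 1
      simp only [hA_def, hcv_def, Matrix.mulVec, dotProduct, Pi.add_apply,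
        Matrix.of_apply]
      rw [mul_add, Finset.mul_sum]
      congr 1
      exact Finset.sum_congr rfl fun i _ => by ring
    -- special indices
    have j0lt : 0 < 2 * n := by omega
    have j1lt : 1 < 2 * n := by omega
    have j2lt : 2 < 2 * n := by omega
    have j3lt : 3 < 2 * n := by omega
    set j0 : Fin (2 * n) := ⟨0, j0lt⟩
    set j1 : Fin (2 * n) := ⟨1, j1lt⟩
    set j2 : Fin (2 * n) := ⟨2, j2lt⟩
    set j3 : Fin (2 * n) := ⟨3, j3lt⟩
    have e0 : ∀ x, relu ((A.mulVec (h x) + cv) j0) = relu (Mt x - x x1) := by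
      intro x; rw [hout]
      rw [hval]
      have : sj j0 = (⟨0, hn⟩ : Fin n) := by simp [hsj_def, j0, Fin.ext_iff]
      rw [this]
      simp [hsg_def, j0]
    have e1 : ∀ x, relu ((A.mulVec (h x) + cv) j1) = relu (-(Mt x - x x1)) := by
      intro x; rw [hout, hval]
      have : sj j1 = (⟨0, hn⟩ : Fin n) := by simp [hsj_def, j1, Fin.ext_iff]
      rw [this]
      simp [hsg_def, j1]
    have e2 : ∀ x, relu ((A.mulVec (h x) + cv) j2) = relu (Mt x + x x1) := by
      intro x; rw [hout, hval]
      have : sj j2 = (⟨1, by omega⟩ : Fin n) := by simp [hsj_def, j2, Fin.ext_iff]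
      rw [this]
      simp [hsg_def, j2]
    have e3 : ∀ x, relu ((A.mulVec (h x) + cv) j3) = relu (-(Mt x + x x1)) := by
      intro x; rw [hout, hval]
      have : sj j3 = (⟨1, by omega⟩ : Fin n) := by simp [hsj_def, j3, Fin.ext_iff]
      rw [this]
      simp [hsg_def, j3]
    -- carry indices
    have eA : ∀ (s : Fin n), t + 1 < (s : ℕ) → ∀ x,
        relu ((A.mulVec (h x) + cv) ⟨2 * (s : ℕ), by have := s.isLt; omega⟩)
          = relu (x s) := by
      intro s hs x
      rw [hout, hval]
      have hsjv : sj ⟨2 * (s : ℕ), by have := s.isLt; omega⟩ = s := by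
        apply Fin.ext; simp only [hsj_def, Fin.val_mk]; omega
      rw [hsjv]
      rw [if_neg (by omega), if_neg (by omega), if_pos hs]
      have : sg ⟨2 * (s : ℕ), by have := s.isLt; omega⟩ = 1 := by
        simp only [hsg_def]
        rw [if_pos (by omega)]
      rw [this, one_mul]
    have eB : ∀ (s : Fin n), t + 1 < (s : ℕ) → ∀ x,
        relu ((A.mulVec (h x) + cv) ⟨2 * (s : ℕ) + 1, by have := s.isLt; omega⟩)
          = relu (-(x s)) := by
      intro s hs x
      rw [hout, hval]
      have hsjv : sj ⟨2 * (s : ℕ) + 1, by have := s.isLt; omega⟩ = s := by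
        apply Fin.ext; simp only [hsj_def, Fin.val_mk]; omega
      rw [hsjv]
      rw [if_neg (by omega), if_neg (by omega), if_pos hs]
      have : sg ⟨2 * (s : ℕ) + 1, by have := s.isLt; omega⟩ = -1 := by
        simp only [hsg_def]
        rw [if_neg (by omega)]
      rw [this]
      congr 1
      ring
    -- assemble
    refine ⟨2 * n, _, stack', ?_, ?_⟩
    · -- min representation
      refine ⟨(Pi.single j0 (-(1/2)) + Pi.single j1 (-(1/2)) + Pi.single j2 (1/2)
        + Pi.single j3 (-(1/2)) : Fin (2 * n) → ℝ), 0, ?_⟩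
      intro x
      have hsum : ∑ j, ((Pi.single j0 (-(1/2)) + Pi.single j1 (-(1/2))
          + Pi.single j2 (1/2) + Pi.single j3 (-(1/2)) : Fin (2 * n) → ℝ) j)
            * relu ((A.mulVec (h x) + cv) j)
          = (-(1/2)) * relu ((A.mulVec (h x) + cv) j0)
            + (-(1/2)) * relu ((A.mulVec (h x) + cv) j1)
            + (1/2) * relu ((A.mulVec (h x) + cv) j2)
            + (-(1/2)) * relu ((A.mulVec (h x) + cv) j3) := by
        simp only [Pi.add_apply, add_mul, Finset.sum_add_distrib, sum_single_mul]
      rw [hsum, e0, e1, e2, e3]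
      have hins : (Finset.univ.filter fun i : Fin n => (i : ℕ) ≤ t + 1)
          = insert x1 (Finset.univ.filter fun i : Fin n => (i : ℕ) ≤ t) := by
        ext i
        simp [hx1def, Fin.ext_iff]
        omega
      refine Eq.trans ?_ (Finset.inf'_congr _ hins (fun _ _ => rfl)).symm
      rw [Finset.inf'_insert]
      show _ = x x1 ⊓ Mt x
      have hmf := min_formula (Mt x) (x x1)
      have h4 : relu (-(Mt x - x x1)) = relu (x x1 - Mt x) := by congr 1; ring
      rw [h4, min_comm, ← hmf]
      ring
    · -- carries
      refine ⟨fun s => (Pi.single (⟨2 * (s : ℕ), by have := s.isLt; omega⟩ : Fin (2*n)) 1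
          + Pi.single (⟨2 * (s : ℕ) + 1, by have := s.isLt; omega⟩ : Fin (2*n)) (-1) :
            Fin (2 * n) → ℝ),
        fun _ => 0, ?_⟩
      intro s hs x
      have hsum : ∑ j, ((Pi.single (⟨2 * (s : ℕ), by have := s.isLt; omega⟩ : Fin (2*n)) 1
          + Pi.single (⟨2 * (s : ℕ) + 1, by have := s.isLt; omega⟩ : Fin (2*n)) (-1) :
            Fin (2 * n) → ℝ) j) * relu ((A.mulVec (h x) + cv) j)
          = 1 * relu ((A.mulVec (h x) + cv) ⟨2 * (s : ℕ), by have := s.isLt; omega⟩)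
            + (-1) * relu ((A.mulVec (h x) + cv) ⟨2 * (s : ℕ) + 1, by have := s.isLt; omega⟩) := by
        simp only [Pi.add_apply, add_mul, Finset.sum_add_distrib, sum_single_mul]
      rw [hsum, eA s hs, eB s hs]
      show 1 * relu (x s) + -1 * relu (-x s) + 0 = x s
      have := relu_sub_relu_neg (x s)
      linarith

/-- for `n ≥ 1`, the minimum function `P(x) = min{x₁,…,x_n}` is exactly
representable by a σ₁-NN of width `2n` and depth `n − 1`. -/
theorem min_exact_sigma1_nn (n : ℕ) (hn : 0 < n) :
    ∃ φ : (Fin n → ℝ) → ℝ, IsNN IsSigma1 n (2 * n) (n - 1) φ ∧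
      ∀ x : Fin n → ℝ,
        φ x = Finset.univ.inf' ⟨⟨0, hn⟩, Finset.mem_univ _⟩ x := by
  obtain ⟨k, h, stack, ⟨w, c, hw⟩, -⟩ := min_stack n hn (n - 1) (by omega)
  refine ⟨fun x => (∑ j, w j * h x j) + c, ⟨k, h, w, c, stack, fun _ => rfl⟩, ?_⟩
  intro x
  have hfe : (Finset.univ.filter fun i : Fin n => (i : ℕ) ≤ n - 1)
      = Finset.univ := by
    ext i
    have := i.isLt
    simp
    omega
  exact (hw x).trans (Finset.inf'_congr _ hfe (fun _ _ => rfl))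
end
end

section
/- Let P(x) = x^α = x₁^{α₁} x₂^{α₂} ⋯ x_d^{α_d} be a monomial on ℝ^d with α ∈ ℕ^d. For any N, L ∈ ℕ₊ such that N·L + 2^{⌊log₂ N⌋} ≥ |α|, there exists a σ₂-NN φ with width 4N + 2d and depth L + ⌈log₂ N⌉ such that φ(x) = P(x) exactly for all x ∈ ℝ^d. -/
open MeasureTheory Set

noncomputable section

namespace MonoNN

def sqr (x : ℝ) : ℝ := x * relu x

lemma isSigma2_relu : IsSigma2 relu := ⟨1, 0, fun x => by ring⟩

lemma isSigma2_sqr : IsSigma2 sqr := ⟨0, 1, fun x => by unfold sqr; ring⟩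

lemma relu_sub_relu_neg (x : ℝ) : relu x - relu (-x) = x := by
  unfold relu
  rcases le_total 0 x with h | h
  · rw [max_eq_left h, max_eq_right (neg_nonpos.2 h)]; ring
  · rw [max_eq_right h, max_eq_left (neg_nonneg.2 h)]; ring

lemma sqr_add_sqr_neg (x : ℝ) : sqr x + sqr (-x) = x ^ 2 := by
  unfold sqr relu
  rcases le_total 0 x with h | h
  · rw [max_eq_left h, max_eq_right (neg_nonpos.2 h)]; ring
  · rw [max_eq_right h, max_eq_left (neg_nonneg.2 h)]; ring

/-- `G` is a family of functions each expressible as an affine functional of the output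
of a hidden stack of depth `L` and width `≤ W`. -/
def Realizable (d W L : ℕ) {ι : Type} [Fintype ι] (G : ι → (Fin d → ℝ) → ℝ) : Prop :=
  ∃ (k : ℕ) (h : (Fin d → ℝ) → Fin k → ℝ) (B : ι → Fin k → ℝ) (c : ι → ℝ),
    IsHiddenStack IsSigma2 d W L k h ∧ ∀ i x, G i x = (∑ j, B i j * h x j) + c i

lemma Realizable.congr {d W L : ℕ} {ι : Type} [Fintype ι]
    {G G' : ι → (Fin d → ℝ) → ℝ} (h : Realizable d W L G)
    (he : ∀ i x, G' i x = G i x) : Realizable d W L G' := by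
  obtain ⟨k, hh, B, c, h1, h2⟩ := h
  exact ⟨k, hh, B, c, h1, fun i x => (he i x).trans (h2 i x)⟩

lemma Realizable.reindex {d W L : ℕ} {ι ι' : Type} [Fintype ι] [Fintype ι']
    {G : ι → (Fin d → ℝ) → ℝ} (h : Realizable d W L G) (e : ι' → ι) :
    Realizable d W L (fun i => G (e i)) := by
  obtain ⟨k, hh, B, c, h1, h2⟩ := h
  exact ⟨k, hh, fun i => B (e i), fun i => c (e i), h1, fun i x => h2 (e i) x⟩


def pcoef : Fin 4 → ℝ := ![1/4, 1/4, -(1/4), -(1/4)]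
def acoef : Fin 2 → ℝ := ![1, -1]

abbrev NIdx (p q : ℕ) := (Fin p × Fin 4) ⊕ (Fin q × Fin 2)

def nEquiv (p q : ℕ) : NIdx p q ≃ Fin (p * 4 + q * 2) :=
  (Equiv.sumCongr finProdFinEquiv finProdFinEquiv).trans finSumFinEquiv

def wc1 {ι : Type} {p q : ℕ} (u v : Fin p → ι → ℝ) (a : Fin q → ι → ℝ) :
    NIdx p q → ι → ℝ :=
  Sum.elim
    (fun pr => ![(fun t => u pr.1 t + v pr.1 t), (fun t => -(u pr.1 t + v pr.1 t)),
                 (fun t => u pr.1 t - v pr.1 t), (fun t => -(u pr.1 t - v pr.1 t))] pr.2)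
    (fun pr => ![a pr.1, fun t => -(a pr.1 t)] pr.2)

def wc0 {p q : ℕ} (u0 v0 : Fin p → ℝ) (a0 : Fin q → ℝ) : NIdx p q → ℝ :=
  Sum.elim
    (fun pr => ![u0 pr.1 + v0 pr.1, -(u0 pr.1 + v0 pr.1),
                 u0 pr.1 - v0 pr.1, -(u0 pr.1 - v0 pr.1)] pr.2)
    (fun pr => ![a0 pr.1, -(a0 pr.1)] pr.2)

def nact (p q : ℕ) : NIdx p q → ℝ → ℝ := Sum.elim (fun _ => sqr) (fun _ => relu)

def bco (p q : ℕ) : (Fin p ⊕ Fin q) → NIdx p q → ℝ :=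
  Sum.elim
    (fun i => Sum.elim (fun pr => if pr.1 = i then pcoef pr.2 else 0) (fun _ => 0))
    (fun i => Sum.elim (fun _ => 0) (fun pr => if pr.1 = i then acoef pr.2 else 0))

lemma prod_combo (S T : ℝ) :
    pcoef 0 * sqr (S + T) + pcoef 1 * sqr (-(S + T)) + pcoef 2 * sqr (S - T)
      + pcoef 3 * sqr (-(S - T)) = S * T := by
  simp only [pcoef, Matrix.cons_val_zero, Matrix.cons_val_one, Matrix.head_cons,
    Matrix.cons_val_two, Matrix.cons_val_three, Matrix.tail_cons]
  linear_combination (sqr_add_sqr_neg (S + T) - sqr_add_sqr_neg (S - T)) / 4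

lemma aff_combo (S : ℝ) : acoef 0 * relu S + acoef 1 * relu (-S) = S := by
  simp only [acoef, Matrix.cons_val_zero, Matrix.cons_val_one, Matrix.head_cons]
  linear_combination relu_sub_relu_neg S

set_option maxHeartbeats 1000000 in
/-- One layer: compute `p` products of pairs of affine functionals of `G` (4 neurons each)
and `q` affine functionals of `G` (2 neurons each). -/
lemma Realizable.step {d W L p q : ℕ} {ι : Type} [Fintype ι] {G : ι → (Fin d → ℝ) → ℝ}
    (hG : Realizable d W L G)
    (u v : Fin p → ι → ℝ) (u0 v0 : Fin p → ℝ)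
    (a : Fin q → ι → ℝ) (a0 : Fin q → ℝ)
    (hW : p * 4 + q * 2 ≤ W) :
    Realizable d W (L + 1)
      (Sum.elim
        (fun i (x : Fin d → ℝ) =>
          ((∑ t, u i t * G t x) + u0 i) * ((∑ t, v i t * G t x) + v0 i))
        (fun i (x : Fin d → ℝ) => (∑ t, a i t * G t x) + a0 i)) := by
  classical
  obtain ⟨k, h, B, c, hst, hBc⟩ := hG
  have lift_spec : ∀ (w : ι → ℝ) (w0 : ℝ) (x : Fin d → ℝ),
      (∑ j, (∑ t, w t * B t j) * h x j) + ((∑ t, w t * c t) + w0)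
        = (∑ t, w t * G t x) + w0 := by
    intro w w0 x
    have h1 : (∑ j, (∑ t, w t * B t j) * h x j) = ∑ t, w t * (G t x - c t) := by
      calc (∑ j, (∑ t, w t * B t j) * h x j)
          = ∑ j, ∑ t, w t * B t j * h x j :=
            Finset.sum_congr rfl fun j _ => Finset.sum_mul _ _ _
        _ = ∑ t, ∑ j, w t * B t j * h x j := Finset.sum_comm
        _ = ∑ t, w t * ∑ j, B t j * h x j := by
            refine Finset.sum_congr rfl fun t _ => ?_
            rw [Finset.mul_sum]
            exact Finset.sum_congr rfl fun j _ => by ring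
        _ = ∑ t, w t * (G t x - c t) := by
            refine Finset.sum_congr rfl fun t _ => ?_
            rw [hBc t x]; ring
    rw [h1]
    simp only [mul_sub, Finset.sum_sub_distrib]
    ring
  set e := nEquiv p q with he
  set A : Matrix (Fin (p * 4 + q * 2)) (Fin k) ℝ :=
    Matrix.of (fun j' t => ∑ t', wc1 u v a (e.symm j') t' * B t' t) with hA
  set cc : Fin (p * 4 + q * 2) → ℝ :=
    (fun j' => (∑ t', wc1 u v a (e.symm j') t' * c t') + wc0 u0 v0 a0 (e.symm j')) with hcc
  set σf : Fin (p * 4 + q * 2) → ℝ → ℝ := (fun j' => nact p q (e.symm j')) with hσf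
  have hact : ∀ j, IsSigma2 (σf j) := by
    have hall : ∀ τ : NIdx p q, IsSigma2 (nact p q τ) := by
      rintro (pr | pr)
      · exact isSigma2_sqr
      · exact isSigma2_relu
    intro j
    exact hall (e.symm j)
  have hstack : IsHiddenStack IsSigma2 d W (L + 1) (p * 4 + q * 2)
      (fun x j => σf j ((A.mulVec (h x) + cc) j)) := hst.succ A cc σf hW hact
  refine ⟨p * 4 + q * 2, _, fun o j => bco p q o (e.symm j), fun _ => 0, hstack, ?_⟩
  intro o x
  -- the value of neuron `e τ`
  have key : ∀ τ : NIdx p q, σf (e τ) ((A.mulVec (h x) + cc) (e τ))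
      = nact p q τ ((∑ t, wc1 u v a τ t * G t x) + wc0 u0 v0 a0 τ) := by
    intro τ
    have h2 : (A.mulVec (h x) + cc) (e τ)
        = (∑ t, wc1 u v a τ t * G t x) + wc0 u0 v0 a0 τ := by
      simp only [Pi.add_apply, Matrix.mulVec, dotProduct, hA, hcc, Matrix.of_apply,
        Equiv.symm_apply_apply]
      exact lift_spec _ _ x
    rw [h2, hσf]
    simp only [Equiv.symm_apply_apply]
  have hsum : (∑ j, bco p q o (e.symm j) * σf j ((A.mulVec (h x) + cc) j))
      = ∑ τ : NIdx p q, bco p q o τ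
          * nact p q τ ((∑ t, wc1 u v a τ t * G t x) + wc0 u0 v0 a0 τ) := by
    rw [← Equiv.sum_comp e
      (fun j => bco p q o (e.symm j) * σf j ((A.mulVec (h x) + cc) j))]
    refine Finset.sum_congr rfl fun τ _ => ?_
    rw [Equiv.symm_apply_apply, key τ]
  rw [hsum, add_zero]
  -- sum over the structured index type
  rw [Fintype.sum_sum_type]
  -- helper identities for the affine sums
  have hadd : ∀ w w' : ι → ℝ, (∑ t, (w t + w' t) * G t x)
      = (∑ t, w t * G t x) + ∑ t, w' t * G t x := by
    intro w w'
    rw [← Finset.sum_add_distrib]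
    exact Finset.sum_congr rfl fun t _ => add_mul _ _ _
  have hsub : ∀ w w' : ι → ℝ, (∑ t, (w t - w' t) * G t x)
      = (∑ t, w t * G t x) - ∑ t, w' t * G t x := by
    intro w w'
    rw [← Finset.sum_sub_distrib]
    exact Finset.sum_congr rfl fun t _ => sub_mul _ _ _
  have hneg : ∀ w : ι → ℝ, (∑ t, (-(w t)) * G t x) = -(∑ t, w t * G t x) := by
    intro w
    rw [← Finset.sum_neg_distrib]
    exact Finset.sum_congr rfl fun t _ => neg_mul _ _
  cases o with
  | inl i =>
    have hzero : (∑ pr : Fin q × Fin 2, bco p q (Sum.inl i) (Sum.inr pr)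
        * nact p q (Sum.inr pr) ((∑ t, wc1 u v a (Sum.inr pr) t * G t x)
          + wc0 u0 v0 a0 (Sum.inr pr))) = 0 := by
      apply Finset.sum_eq_zero
      intro pr _
      simp [bco]
    rw [hzero, add_zero, Fintype.sum_prod_type]
    have hrow : ∀ i' : Fin p, (∑ r : Fin 4, bco p q (Sum.inl i) (Sum.inl (i', r))
        * nact p q (Sum.inl (i', r)) ((∑ t, wc1 u v a (Sum.inl (i', r)) t * G t x)
          + wc0 u0 v0 a0 (Sum.inl (i', r))))
        = if i' = i then ((∑ t, u i' t * G t x) + u0 i') * ((∑ t, v i' t * G t x) + v0 i')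
          else 0 := by
      intro i'
      by_cases hii : i' = i
      · subst hii
        simp only [bco, Sum.elim_inl, if_pos rfl, nact, wc1, wc0, Fin.sum_univ_four]
        simp only [Matrix.cons_val_zero, Matrix.cons_val_one, Matrix.head_cons,
          Matrix.cons_val_two, Matrix.cons_val_three, Matrix.tail_cons]
        rw [hadd (u i') (v i'), hsub (u i') (v i'),
          hneg (fun t => u i' t + v i' t), hneg (fun t => u i' t - v i' t),
          hadd (u i') (v i'), hsub (u i') (v i')]
        rw [show ((∑ t, u i' t * G t x) + (∑ t, v i' t * G t x)) + (u0 i' + v0 i')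
            = ((∑ t, u i' t * G t x) + u0 i') + ((∑ t, v i' t * G t x) + v0 i') from by ring]
        rw [show (-((∑ t, u i' t * G t x) + (∑ t, v i' t * G t x))) + (-(u0 i' + v0 i'))
            = -((((∑ t, u i' t * G t x) + u0 i')) + (((∑ t, v i' t * G t x) + v0 i')))
            from by ring]
        rw [show ((∑ t, u i' t * G t x) - (∑ t, v i' t * G t x)) + (u0 i' - v0 i')
            = ((∑ t, u i' t * G t x) + u0 i') - ((∑ t, v i' t * G t x) + v0 i') from by ring]
        rw [show (-((∑ t, u i' t * G t x) - (∑ t, v i' t * G t x))) + (-(u0 i' - v0 i'))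
            = -((((∑ t, u i' t * G t x) + u0 i')) - (((∑ t, v i' t * G t x) + v0 i')))
            from by ring]
        exact prod_combo _ _
      · simp [bco, hii]
    rw [Finset.sum_congr rfl (fun i' (_ : i' ∈ Finset.univ) => hrow i'),
      Finset.sum_ite_eq' Finset.univ i]
    simp
  | inr i =>
    have hzero : (∑ pr : Fin p × Fin 4, bco p q (Sum.inr i) (Sum.inl pr)
        * nact p q (Sum.inl pr) ((∑ t, wc1 u v a (Sum.inl pr) t * G t x)
          + wc0 u0 v0 a0 (Sum.inl pr))) = 0 := by
      apply Finset.sum_eq_zero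
      intro pr _
      simp [bco]
    rw [hzero, zero_add, Fintype.sum_prod_type]
    have hrow : ∀ i' : Fin q, (∑ r : Fin 2, bco p q (Sum.inr i) (Sum.inr (i', r))
        * nact p q (Sum.inr (i', r)) ((∑ t, wc1 u v a (Sum.inr (i', r)) t * G t x)
          + wc0 u0 v0 a0 (Sum.inr (i', r))))
        = if i' = i then ((∑ t, a i' t * G t x) + a0 i') else 0 := by
      intro i'
      by_cases hii : i' = i
      · subst hii
        simp only [bco, Sum.elim_inr, if_pos rfl, nact, wc1, wc0, Fin.sum_univ_two]
        simp only [Matrix.cons_val_zero, Matrix.cons_val_one, Matrix.head_cons]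
        rw [hneg (a i')]
        rw [show (-(∑ t, a i' t * G t x)) + (-(a0 i'))
            = -((∑ t, a i' t * G t x) + a0 i') from by ring]
        exact aff_combo _
      · simp [bco, hii]
    rw [Finset.sum_congr rfl (fun i' (_ : i' ∈ Finset.univ) => hrow i'),
      Finset.sum_ite_eq' Finset.univ i]
    simp

/-! ### Monomial factor bookkeeping -/

def ovalue {d : ℕ} (o : Option (Fin d)) (x : Fin d → ℝ) : ℝ := o.elim 1 (fun i => x i)

@[simp] lemma ovalue_none {d : ℕ} (x : Fin d → ℝ) : ovalue none x = 1 := rfl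
@[simp] lemma ovalue_some {d : ℕ} (i : Fin d) (x : Fin d → ℝ) : ovalue (some i) x = x i := rfl

def facList (d : ℕ) (α : Fin d → ℕ) (M : ℕ) : List (Option (Fin d)) :=
  (List.ofFn fun i => List.replicate (α i) (some i)).flatten
    ++ List.replicate (M - ∑ i, α i) none

lemma facList_length {d M : ℕ} {α : Fin d → ℕ} (h : (∑ i, α i) ≤ M) :
    (facList d α M).length = M := by
  simp only [facList, List.length_append, List.length_flatten, List.map_ofFn,
    Function.comp, List.length_replicate, List.sum_ofFn]
  omega

lemma facList_prod {d M : ℕ} {α : Fin d → ℕ} (x : Fin d → ℝ) :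
    ((facList d α M).map (fun o => ovalue o x)).prod = ∏ i, x i ^ α i := by
  simp [facList, List.map_append, List.prod_append, List.map_flatten, List.prod_flatten,
    List.map_ofFn, List.map_replicate, List.prod_replicate, List.prod_ofFn,
    Function.comp, one_pow]

lemma prod_getD {β : Type*} (l : List β) (f : β → ℝ) (dflt : β) :
    ∏ q ∈ Finset.range l.length, f (l.getD q dflt) = (l.map f).prod := by
  induction l with
  | nil => simp
  | cons a l ih =>
      rw [List.length_cons, Finset.prod_range_succ']
      simp only [List.getD_cons_succ, List.getD_cons_zero, List.map_cons, List.prod_cons]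
      rw [ih]; ring

def facN (d N L : ℕ) (α : Fin d → ℕ) (j : Fin N) (t : ℕ) : Option (Fin d) :=
  if h : t < L + 1 then
    (facList d α (N * (L + 1))).getD ((finProdFinEquiv (j, (⟨t, h⟩ : Fin (L + 1)))) : ℕ) none
  else none

def reg (d N L : ℕ) (α : Fin d → ℕ) (u : ℕ) (j : Fin N) (x : Fin d → ℝ) : ℝ :=
  ∏ t ∈ Finset.range u, ovalue (facN d N L α j t) x

set_option maxHeartbeats 1000000 in
lemma reg_total {d N L : ℕ} {α : Fin d → ℕ} (h : (∑ i, α i) ≤ N * (L + 1)) (x : Fin d → ℝ) :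
    ∏ j : Fin N, reg d N L α (L + 1) j x = ∏ i, x i ^ α i := by
  have hlen := facList_length (d := d) (α := α) (M := N * (L + 1)) h
  calc ∏ j : Fin N, reg d N L α (L + 1) j x
      = ∏ j : Fin N, ∏ t : Fin (L + 1),
          ovalue ((facList d α (N * (L + 1))).getD ((finProdFinEquiv (j, t)) : ℕ) none) x := by
        refine Finset.prod_congr rfl fun j _ => ?_
        rw [reg, Finset.prod_range]
        refine Finset.prod_congr rfl fun t _ => ?_
        rw [facN, dif_pos t.isLt]
    _ = ∏ pq : Fin N × Fin (L + 1),
          ovalue ((facList d α (N * (L + 1))).getD ((finProdFinEquiv pq) : ℕ) none) x :=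
        by rw [Fintype.prod_prod_type]
    _ = ∏ q : Fin (N * (L + 1)),
          ovalue ((facList d α (N * (L + 1))).getD (q : ℕ) none) x :=
        by rw [← Equiv.prod_comp (finProdFinEquiv (m := N) (n := L + 1))]
    _ = ∏ q ∈ Finset.range (N * (L + 1)),
          ovalue ((facList d α (N * (L + 1))).getD q none) x := by rw [Finset.prod_range]
    _ = ((facList d α (N * (L + 1))).map (fun o => ovalue o x)).prod := by
        have h2 := prod_getD (facList d α (N * (L + 1))) (fun o => ovalue o x) none
        rwa [hlen] at h2
    _ = ∏ i, x i ^ α i := facList_prod x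

/-! ### Coefficient selectors -/

def cvec (N : ℕ) {d : ℕ} (o : Option (Fin d)) : Fin N ⊕ Fin d → ℝ :=
  o.elim 0 (fun i => Sum.elim 0 (fun i' => if i' = i then 1 else 0))

def cconst {d : ℕ} (o : Option (Fin d)) : ℝ := o.elim 1 (fun _ => 0)

lemma cvec_spec {d N : ℕ} (o : Option (Fin d)) (F : Fin N ⊕ Fin d → (Fin d → ℝ) → ℝ)
    (x : Fin d → ℝ) (hF : ∀ i, F (Sum.inr i) x = x i) :
    (∑ t, cvec N o t * F t x) + cconst o = ovalue o x := by
  cases o with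
  | none => simp [cvec, cconst]
  | some i =>
    simp [cvec, cconst, Fintype.sum_sum_type, ite_mul, Finset.sum_ite_eq', hF]

def ivecS {N d : ℕ} (j : Fin N) : Fin N ⊕ Fin d → ℝ :=
  Sum.elim (fun t => if t = j then 1 else 0) 0

lemma ivecS_spec {N d : ℕ} (j : Fin N) (F : Fin N ⊕ Fin d → (Fin d → ℝ) → ℝ)
    (x : Fin d → ℝ) :
    (∑ t, ivecS (d := d) j t * F t x) + 0 = F (Sum.inl j) x := by
  simp [ivecS, Fintype.sum_sum_type, ite_mul, Finset.sum_ite_eq']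

def xvec {N d : ℕ} (i : Fin d) : Fin N ⊕ Fin d → ℝ :=
  Sum.elim 0 (fun i' => if i' = i then 1 else 0)

lemma xvec_spec {N d : ℕ} (i : Fin d) (F : Fin N ⊕ Fin d → (Fin d → ℝ) → ℝ)
    (x : Fin d → ℝ) :
    (∑ t, xvec (N := N) i t * F t x) + 0 = F (Sum.inr i) x := by
  simp [xvec, Fintype.sum_sum_type, ite_mul, Finset.sum_ite_eq']

/-! ### Stage 1 -/

set_option maxHeartbeats 1000000 in
lemma stage1 (d N L : ℕ) (α : Fin d → ℕ) :
    ∀ u, u ≤ L → Realizable d (4 * N + 2 * d) u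
      (Sum.elim (fun (j : Fin N) => reg d N L α (if u = 0 then 0 else u + 1) j)
        (fun (i : Fin d) (x : Fin d → ℝ) => x i)) := by
  intro u
  induction u with
  | zero =>
    intro _
    refine ⟨d, fun x => x, Sum.elim (fun _ _ => 0) (fun i t => if t = i then 1 else 0),
      Sum.elim (fun _ => 1) (fun _ => 0), IsHiddenStack.zero, ?_⟩
    rintro (j | i) x
    · simp [reg]
    · simp [Finset.sum_ite_eq']
  | succ u ih =>
    intro hu
    have prev := ih (Nat.le_of_succ_le hu)
    have hwidth : N * 4 + d * 2 ≤ 4 * N + 2 * d := by omega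
    by_cases hu0 : u = 0
    · subst hu0
      have hstep := prev.step
        (fun j => cvec N (facN d N L α j 0)) (fun j => cvec N (facN d N L α j 1))
        (fun j => cconst (facN d N L α j 0)) (fun j => cconst (facN d N L α j 1))
        (fun i => xvec i) (fun _ => 0) hwidth
      refine hstep.congr ?_
      rintro (j | i) x
      · simp only [Sum.elim_inl]
        have e1 := cvec_spec (facN d N L α j 0)
          (Sum.elim (fun (j : Fin N) => reg d N L α (if 0 = 0 then 0 else 0 + 1) j)
            (fun (i : Fin d) (x : Fin d → ℝ) => x i)) x (fun i => rfl)
        have e2 := cvec_spec (facN d N L α j 1)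
          (Sum.elim (fun (j : Fin N) => reg d N L α (if 0 = 0 then 0 else 0 + 1) j)
            (fun (i : Fin d) (x : Fin d → ℝ) => x i)) x (fun i => rfl)
        simp only [reduceIte] at e1 e2 ⊢
        rw [e1, e2]
        simp [reg, Finset.prod_range_succ]
      · simp only [Sum.elim_inr]
        have e3 := xvec_spec (N := N) i
          (Sum.elim (fun (j : Fin N) => reg d N L α (if 0 = 0 then 0 else 0 + 1) j)
            (fun (i : Fin d) (x : Fin d → ℝ) => x i)) x
        exact e3.symm
    · have hstep := prev.step
        (fun j => ivecS j) (fun j => cvec N (facN d N L α j (u + 1)))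
        (fun _ => 0) (fun j => cconst (facN d N L α j (u + 1)))
        (fun i => xvec i) (fun _ => 0) hwidth
      refine hstep.congr ?_
      rintro (j | i) x
      · simp only [Sum.elim_inl]
        have e1 := ivecS_spec (d := d) j
          (Sum.elim (fun (j : Fin N) => reg d N L α (if u = 0 then 0 else u + 1) j)
            (fun (i : Fin d) (x : Fin d → ℝ) => x i)) x
        have e2 := cvec_spec (facN d N L α j (u + 1))
          (Sum.elim (fun (j : Fin N) => reg d N L α (if u = 0 then 0 else u + 1) j)
            (fun (i : Fin d) (x : Fin d → ℝ) => x i)) x (fun i => rfl)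
        rw [e1, e2]
        simp [reg, Finset.prod_range_succ, hu0, Nat.succ_ne_zero]
      · simp only [Sum.elim_inr]
        have e3 := xvec_spec (N := N) i
          (Sum.elim (fun (j : Fin N) => reg d N L α (if u = 0 then 0 else u + 1) j)
            (fun (i : Fin d) (x : Fin d → ℝ) => x i)) x
        exact e3.symm

/-! ### Stage 2 -/

def nvec1 (N k : ℕ) : Fin N → ℝ :=
  if h : k < N then (fun t => if t = ⟨k, h⟩ then 1 else 0) else 0

def nvec0 (N k : ℕ) : ℝ := if k < N then 0 else 1

def Vval {d : ℕ} (N : ℕ) (v : Fin N → (Fin d → ℝ) → ℝ) (k : ℕ) (x : Fin d → ℝ) : ℝ :=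
  if h : k < N then v ⟨k, h⟩ x else 1

lemma nvec_spec {d N : ℕ} (k : ℕ) (v : Fin N → (Fin d → ℝ) → ℝ) (x : Fin d → ℝ) :
    (∑ t, nvec1 N k t * v t x) + nvec0 N k = Vval N v k x := by
  by_cases h : k < N <;>
    simp [nvec1, nvec0, Vval, h, ite_mul, Finset.sum_ite_eq']

lemma prod_pair (V : ℕ → ℝ) (n : ℕ) :
    ∏ i ∈ Finset.range n, (V (2 * i) * V (2 * i + 1)) = ∏ k ∈ Finset.range (2 * n), V k := by
  induction n with
  | zero => simp
  | succ n ih =>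
    rw [Finset.prod_range_succ, ih, show 2 * (n + 1) = 2 * n + 1 + 1 by ring,
      Finset.prod_range_succ, Finset.prod_range_succ]
    ring

set_option maxHeartbeats 1000000 in
lemma stage2 {d W N : ℕ} (hN : 0 < N) (hW : N * 4 + 0 * 2 ≤ W)
    (T : (Fin d → ℝ) → ℝ) :
    ∀ m, 1 ≤ m → ∀ D (v : Fin N → (Fin d → ℝ) → ℝ),
      Realizable d W D v → (∀ x, ∏ j, v j x = T x) →
      (∀ j : Fin N, m ≤ (j : ℕ) → ∀ x, v j x = 1) →
      ∃ w : Fin N → (Fin d → ℝ) → ℝ,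
        Realizable d W (D + Nat.clog 2 m) w ∧ ∀ x, w ⟨0, hN⟩ x = T x := by
  intro m
  induction m using Nat.strong_induction_on with
  | _ m IH =>
    intro hm D v hR hT h1
    rcases eq_or_lt_of_le hm with hm1 | hm2
    · -- m = 1 : done, register 0 carries the product
      refine ⟨v, ?_, ?_⟩
      · rw [← hm1, Nat.clog_one_right, Nat.add_zero]
        exact hR
      · intro x
        rw [← hT x]
        refine (Fintype.prod_eq_single _ (fun j hj => h1 j ?_ x)).symm
        rw [← hm1]
        rcases Nat.eq_or_lt_of_le (Nat.zero_le (j : ℕ)) with h0 | h0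
        · exact absurd (Fin.ext h0.symm : j = ⟨0, hN⟩) hj
        · exact h0
    · -- 2 ≤ m : one more halving layer
      have hm2' : 2 ≤ m := hm2
      have hstep := hR.step (p := N) (q := 0)
        (fun i => nvec1 N (2 * (i : ℕ))) (fun i => nvec1 N (2 * (i : ℕ) + 1))
        (fun i => nvec0 N (2 * (i : ℕ))) (fun i => nvec0 N (2 * (i : ℕ) + 1))
        (fun i => 0) (fun i => 0) hW
      have hre := hstep.reindex (Sum.inl : Fin N → Fin N ⊕ Fin 0)
      have hre2 : Realizable d W (D + 1)
          (fun (i : Fin N) x => Vval N v (2 * (i : ℕ)) x * Vval N v (2 * (i : ℕ) + 1) x) := by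
        refine hre.congr fun i x => ?_
        simp only [Sum.elim_inl]
        rw [← nvec_spec (2 * (i : ℕ)) v x, ← nvec_spec (2 * (i : ℕ) + 1) v x]
      have hT' : ∀ x, ∏ j : Fin N,
          (Vval N v (2 * (j : ℕ)) x * Vval N v (2 * (j : ℕ) + 1) x) = T x := by
        intro x
        rw [← Finset.prod_range (fun i => Vval N v (2 * i) x * Vval N v (2 * i + 1) x),
          prod_pair (fun k => Vval N v k x) N]
        have hsub : Finset.range N ⊆ Finset.range (2 * N) :=
          Finset.range_subset_range.2 (by omega)
        have hone : ∀ k ∈ Finset.range (2 * N), k ∉ Finset.range N → Vval N v k x = 1 := by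
          intro k _ hk
          simp only [Vval]
          rw [dif_neg (by simpa using hk)]
        rw [← Finset.prod_subset hsub hone, Finset.prod_range (fun k => Vval N v k x), ← hT x]
        refine Finset.prod_congr rfl fun j _ => ?_
        simp only [Vval]
        rw [dif_pos j.isLt]
      have h1' : ∀ j : Fin N, (m + 1) / 2 ≤ (j : ℕ) → ∀ x,
          Vval N v (2 * (j : ℕ)) x * Vval N v (2 * (j : ℕ) + 1) x = 1 := by
        intro j hj x
        have hone : ∀ k, m ≤ k → Vval N v k x = 1 := by
          intro k hk
          simp only [Vval]
          split
          · exact h1 _ hk x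
          · rfl
        rw [hone _ (by omega), hone _ (by omega), one_mul]
      obtain ⟨w, hw, hw0⟩ := IH ((m + 1) / 2) (by omega) (by omega) (D + 1)
        _ hre2 hT' h1'
      refine ⟨w, ?_, hw0⟩
      have hclog : Nat.clog 2 m = Nat.clog 2 ((m + 1) / 2) + 1 := by
        rw [Nat.clog_of_two_le (by norm_num) hm2',
          show (m + 2 - 1) / 2 = (m + 1) / 2 from by omega]
      have hD : D + Nat.clog 2 m = D + 1 + Nat.clog 2 ((m + 1) / 2) := by omega
      rw [hD]
      exact hw

end MonoNN

open MonoNN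

/-- a monomial `P(x) = x^α` is exactly representable by a σ₂-NN of width
`4N + 2d` and depth `L + ⌈log₂ N⌉`, provided `N·L + 2^{⌊log₂ N⌋} ≥ |α|`. -/
theorem monomial_exact_sigma2_nn (d : ℕ) (hd : 0 < d) (α : Fin d → ℕ)
    (N L : ℕ) (hN : 0 < N) (hL : 0 < L)
    (hcap : (∑ i, α i) ≤ N * L + 2 ^ (Nat.log 2 N)) :
    ∃ φ : (Fin d → ℝ) → ℝ,
      IsNN IsSigma2 d (4 * N + 2 * d) (L + Nat.clog 2 N) φ ∧
      ∀ x : Fin d → ℝ, φ x = ∏ i, x i ^ α i := by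
  have h2N : 2 ^ Nat.log 2 N ≤ N := Nat.pow_log_le_self 2 hN.ne'
  have hsM : (∑ i, α i) ≤ N * (L + 1) := by
    rw [Nat.mul_succ]; omega
  have hst1 := stage1 d N L α L le_rfl
  rw [if_neg hL.ne'] at hst1
  have hres := hst1.reindex (Sum.inl : Fin N → Fin N ⊕ Fin d)
  have hv : Realizable d (4 * N + 2 * d) L (fun j : Fin N => reg d N L α (L + 1) j) :=
    hres.congr (fun j x => rfl)
  have hT : ∀ x, ∏ j, reg d N L α (L + 1) j x = ∏ i, x i ^ α i := reg_total hsM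
  obtain ⟨w, hw, hw0⟩ := stage2 (d := d) hN
    (show N * 4 + 0 * 2 ≤ 4 * N + 2 * d by omega)
    (fun x => ∏ i, x i ^ α i) N hN L _ hv hT
    (fun j hj x => absurd j.isLt (by omega))
  obtain ⟨k, h, B, c, hstk, hspec⟩ := hw
  refine ⟨fun x => (∑ j, B ⟨0, hN⟩ j * h x j) + c ⟨0, hN⟩,
    ⟨k, h, B ⟨0, hN⟩, c ⟨0, hN⟩, hstk, fun x => rfl⟩, fun x => ?_⟩
  show (∑ j : Fin k, B ⟨0, hN⟩ j * h x j) + c ⟨0, hN⟩ = ∏ i : Fin d, x i ^ α i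
  rw [← hspec ⟨0, hN⟩ x, hw0 x]
end
end

section
/- Let d ∈ ℕ₊ and define the spike function φ : ℝ^d → ℝ by φ(x) = max{ 0, min( min_{k ≠ s} (1 + x_k − x_s), min_k (1 + x_k), min_k (1 − x_k) ) }, where k, s range over {1,…,d}. Then φ can be exactly represented by a σ₁-NN of width 12 + 2d and depth d² − d + 1, i.e., there exists a σ₁-NN Φ with width 12 + 2d and depth d² − d + 1 such that Φ(x) = φ(x) for all x ∈ ℝ^d. -/
open MeasureTheory Set

noncomputable section

/-- The spike function
`φ(x) = max{0, min( min_{k ≠ s}(1 + x_k − x_s), min_k (1 + x_k), min_k (1 − x_k) )}`,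
written using the infimum of the (finite, nonempty for `d ≥ 1`) set of all the
quantities appearing inside the minima. -/
def spike (d : ℕ) (x : Fin d → ℝ) : ℝ :=
  max 0 (sInf ({v | ∃ k s : Fin d, k ≠ s ∧ v = 1 + x k - x s} ∪
               {v | ∃ k : Fin d, v = 1 + x k} ∪ {v | ∃ k : Fin d, v = 1 - x k}))

namespace SpikeAux

lemma relu_nonneg (a : ℝ) : 0 ≤ relu a := le_max_right _ _

lemma relu_of_nonneg {a : ℝ} (h : 0 ≤ a) : relu a = a := max_eq_left h

lemma relu_relu (a : ℝ) : relu (relu a) = relu a := relu_of_nonneg (relu_nonneg a)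

lemma sub_relu_eq_min (a b : ℝ) : a - relu (a - b) = min a b := by
  rcases le_total a b with h | h
  · rw [relu, max_eq_right (by linarith), min_eq_left h]; ring
  · rw [relu, max_eq_left (by linarith), min_eq_right h]; ring

lemma add_relu_eq_max (a b : ℝ) : b + relu (a - b) = max a b := by
  rcases le_total a b with h | h
  · rw [relu, max_eq_right (by linarith), max_eq_right h]; ring
  · rw [relu, max_eq_left (by linarith), max_eq_left h]; ring

lemma relu_sub_relu_neg (a : ℝ) : relu a - relu (-a) = a := by
  rcases le_total a 0 with h | h
  · rw [relu, relu, max_eq_right h, max_eq_left (by linarith)]; ring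
  · rw [relu, relu, max_eq_left h, max_eq_right (by linarith)]; ring

/-- linear form given by a list of (coefficient, index) pairs -/
def lin {k : ℕ} (l : List (ℝ × Fin k)) (v : Fin k → ℝ) : ℝ :=
  (l.map (fun p => p.1 * v p.2)).sum

@[simp] lemma lin_nil {k : ℕ} (v : Fin k → ℝ) : lin ([] : List (ℝ × Fin k)) v = 0 := rfl

@[simp] lemma lin_cons {k : ℕ} (p : ℝ × Fin k) (l : List (ℝ × Fin k)) (v : Fin k → ℝ) :
    lin (p :: l) v = p.1 * v p.2 + lin l v := rfl

lemma sum_row {k : ℕ} (l : List (ℝ × Fin k)) (v : Fin k → ℝ) :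
    ∑ i, ((l.map (fun p => if p.2 = i then p.1 else 0)).sum) * v i = lin l v := by
  induction l with
  | nil => simp
  | cons p l ih =>
    simp only [List.map_cons, List.sum_cons, add_mul, Finset.sum_add_distrib, ih, lin_cons]
    congr 1
    rw [Finset.sum_congr rfl (fun i _ => by rw [ite_mul, zero_mul])]
    simp

lemma stack_layer {d N L k k' : ℕ} {h : (Fin d → ℝ) → Fin k → ℝ}
    (hs : IsHiddenStack IsSigma1 d N L k h)
    (rows : Fin k' → List (ℝ × Fin k)) (c : Fin k' → ℝ) (hk : k' ≤ N)
    {f : (Fin d → ℝ) → Fin k' → ℝ}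
    (hf : ∀ x j, f x j = relu (lin (rows j) (h x) + c j)) :
    IsHiddenStack IsSigma1 d N (L + 1) k' f := by
  set A : Matrix (Fin k') (Fin k) ℝ :=
    fun j i => ((rows j).map (fun p => if p.2 = i then p.1 else 0)).sum with hAdef
  have hA : f = fun x j => (fun _ : Fin k' => relu) j ((A.mulVec (h x) + c) j) := by
    funext x j
    rw [hf]
    congr 1
    simp only [Pi.add_apply, Matrix.mulVec, dotProduct, hAdef]
    rw [sum_row]
  rw [hA]
  exact IsHiddenStack.succ A c _ hs hk (fun _ => rfl)

lemma stack_pad {d N L : ℕ} {g : (Fin d → ℝ) → Fin 1 → ℝ}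
    (hs : IsHiddenStack IsSigma1 d N L 1 g) (hN : 1 ≤ N)
    (hg : ∀ x, 0 ≤ g x 0) :
    ∀ p, IsHiddenStack IsSigma1 d N (L + p) 1 g := by
  intro p
  induction p with
  | zero => exact hs
  | succ p ih =>
    have : L + (p + 1) = (L + p) + 1 := by omega
    rw [this]
    refine stack_layer ih (fun _ => [(1, 0)]) (fun _ => 0) hN (fun x j => ?_)
    have : j = 0 := Subsingleton.elim _ _
    subst this
    simp [relu_of_nonneg (hg x)]

end SpikeAux

namespace SpikeAux

lemma spike_eq {d : ℕ} (hd : 0 < d) (x : Fin d → ℝ) (a b : ℝ)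
    (ha : ∀ k, x k ≤ a) (ha' : ∃ k, x k = a)
    (hb : ∀ k, b ≤ x k) (hb' : ∃ k, x k = b) :
    spike d x = max 0 (1 + min (b - a) (min b (-a))) := by
  have hle : b ≤ a := by obtain ⟨k, hk⟩ := ha'; exact le_trans (hb k) (by rw [hk])
  unfold spike
  congr 1
  apply IsLeast.csInf_eq
  constructor
  · -- membership
    obtain ⟨ka, hka⟩ := ha'
    obtain ⟨kb, hkb⟩ := hb'
    rcases le_total b (-a) with h1 | h1
    · rcases le_total (b - a) b with h2 | h2
      · -- min = b - a, with 0 ≤ a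
        rw [min_eq_left h1, min_eq_left h2]
        by_cases hks : kb = ka
        · -- a = b, forces a = b = 0
          have hab : a = b := by rw [← hka, ← hkb, hks]
          have ha0 : a = 0 := by apply le_antisymm <;> linarith
          left; right
          exact ⟨kb, by rw [hkb, ← hab, ha0]; ring⟩
        · left; left
          exact ⟨kb, ka, hks, by rw [hka, hkb]; ring⟩
      · rw [min_eq_left h1, min_eq_right h2]
        left; right
        exact ⟨kb, by rw [hkb]⟩
    · rcases le_total (b - a) (-a) with h2 | h2
      · rw [min_eq_right h1, min_eq_left h2]
        by_cases hks : kb = ka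
        · have hab : a = b := by rw [← hka, ← hkb, hks]
          have ha0 : a = 0 := by apply le_antisymm <;> linarith
          right
          exact ⟨ka, by rw [hka, ← hab, ha0]; ring⟩
        · left; left
          exact ⟨kb, ka, hks, by rw [hka, hkb]; ring⟩
      · rw [min_eq_right h1, min_eq_right h2]
        right
        exact ⟨ka, by rw [hka]; ring⟩
  · -- lower bound
    rintro v ((⟨k, s, hks, rfl⟩ | ⟨k, rfl⟩) | ⟨k, rfl⟩)
    · have h1 : min (b - a) (min b (-a)) ≤ b - a := min_le_left _ _
      have := hb k; have := ha s; linarith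
    · have h1 : min (b - a) (min b (-a)) ≤ b := (min_le_right _ _).trans (min_le_left _ _)
      have := hb k; linarith
    · have h1 : min (b - a) (min b (-a)) ≤ -a := (min_le_right _ _).trans (min_le_right _ _)
      have := ha k; linarith

end SpikeAux

namespace SpikeAux

variable {d : ℕ}

def xv (x : Fin d → ℝ) (n : ℕ) : ℝ := if h : n < d then x ⟨n, h⟩ else 0

def uu (x : Fin d → ℝ) : ℕ → ℝ
  | 0 => 0
  | t + 1 => relu (xv x t + uu x t - xv x (t + 1))

def ww (x : Fin d → ℝ) : ℕ → ℝ
  | 0 => 0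
  | t + 1 => relu (xv x (t + 1) - xv x t + ww x t)

def mx (x : Fin d → ℝ) : ℕ → ℝ
  | 0 => xv x 0
  | t + 1 => max (mx x t) (xv x (t + 1))

def mn (x : Fin d → ℝ) : ℕ → ℝ
  | 0 => xv x 0
  | t + 1 => min (mn x t) (xv x (t + 1))

lemma mx_eq (x : Fin d → ℝ) : ∀ t, xv x t + uu x t = mx x t
  | 0 => by simp [uu, mx]
  | t + 1 => by
    rw [uu, mx, ← mx_eq x t]
    linarith [add_relu_eq_max (xv x t + uu x t) (xv x (t+1))]

lemma mn_eq (x : Fin d → ℝ) : ∀ t, xv x t - ww x t = mn x t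
  | 0 => by simp [ww, mn]
  | t + 1 => by
    rw [ww, mn, ← mn_eq x t, min_comm, ← sub_relu_eq_min (xv x (t+1))]
    ring_nf

lemma mx_ge (x : Fin d → ℝ) : ∀ t, ∀ j ≤ t, xv x j ≤ mx x t
  | 0, j, hj => by simp_all [mx]
  | t + 1, j, hj => by
    rcases Nat.lt_or_ge j (t+1) with h | h
    · exact le_trans (mx_ge x t j (by omega)) (le_max_left _ _)
    · have : j = t + 1 := by omega
      subst this; exact le_max_right _ _

lemma mn_le (x : Fin d → ℝ) : ∀ t, ∀ j ≤ t, mn x t ≤ xv x j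
  | 0, j, hj => by simp_all [mn]
  | t + 1, j, hj => by
    rcases Nat.lt_or_ge j (t+1) with h | h
    · exact le_trans (min_le_left _ _) (mn_le x t j (by omega))
    · have : j = t + 1 := by omega
      subst this; exact min_le_right _ _

lemma mx_mem (x : Fin d → ℝ) : ∀ t, ∃ j ≤ t, mx x t = xv x j
  | 0 => ⟨0, le_refl _, rfl⟩
  | t + 1 => by
    obtain ⟨j, hj, he⟩ := mx_mem x t
    rcases le_total (mx x t) (xv x (t+1)) with h | h
    · exact ⟨t+1, le_refl _, by rw [mx, max_eq_right h]⟩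
    · exact ⟨j, by omega, by rw [mx, max_eq_left h, he]⟩

lemma mn_mem (x : Fin d → ℝ) : ∀ t, ∃ j ≤ t, mn x t = xv x j
  | 0 => ⟨0, le_refl _, rfl⟩
  | t + 1 => by
    obtain ⟨j, hj, he⟩ := mn_mem x t
    rcases le_total (mn x t) (xv x (t+1)) with h | h
    · exact ⟨j, by omega, by rw [mn, min_eq_left h, he]⟩
    · exact ⟨t+1, le_refl _, by rw [mn, min_eq_right h]⟩

lemma uu_nonneg (x : Fin d → ℝ) : ∀ t, 0 ≤ uu x t
  | 0 => le_refl _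
  | t + 1 => relu_nonneg _

lemma ww_nonneg (x : Fin d → ℝ) : ∀ t, 0 ≤ ww x t
  | 0 => le_refl _
  | t + 1 => relu_nonneg _

/-- The state of the running max/min chain after layer `t+1`. -/
def HS (t : ℕ) (x : Fin d → ℝ) (j : Fin (2 * d + 2)) : ℝ :=
  if (j : ℕ) < d then relu (xv x j)
  else if (j : ℕ) < 2 * d then relu (-(xv x ((j : ℕ) - d)))
  else if (j : ℕ) = 2 * d then uu x t else ww x t

lemma HS_nonneg (t : ℕ) (x : Fin d → ℝ) (j : Fin (2 * d + 2)) : 0 ≤ HS t x j := by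
  unfold HS
  split_ifs
  · exact relu_nonneg _
  · exact relu_nonneg _
  · exact uu_nonneg x t
  · exact ww_nonneg x t

lemma chain (hd : 0 < d) : ∀ t, t < d →
    IsHiddenStack IsSigma1 d (12 + 2 * d) (t + 1) (2 * d + 2) (fun x => HS t x) := by
  intro t
  induction t with
  | zero =>
    intro _
    refine stack_layer (IsHiddenStack.zero)
      (fun j => if h : (j : ℕ) < d then [(1, ⟨j, h⟩)]
        else if h2 : (j : ℕ) < 2 * d then [(-1, ⟨(j : ℕ) - d, by omega⟩)] else [])
      (fun _ => 0) (by omega) ?_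
    intro x j
    by_cases h : (j : ℕ) < d
    · simp [HS, h, xv]
    · by_cases h2 : (j : ℕ) < 2 * d
      · simp [HS, h, h2, xv, show (j:ℕ) - d < d by omega]
      · rcases Nat.lt_or_ge (j : ℕ) (2*d+1) with h3 | h3
        · have : (j : ℕ) = 2 * d := by omega
          simp [HS, h, h2, this, uu, relu, show ¬(2*d < d) by omega, show ¬(2*d < 2*d) by omega]
        · have : ¬((j : ℕ) = 2 * d) := by omega
          simp [HS, h, h2, this, ww, relu]
  | succ t ih =>
    intro ht
    refine stack_layer (ih (by omega))
      (fun j => if (j : ℕ) < 2 * d then [((1:ℝ), j)]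
        else if (j : ℕ) = 2 * d then
          [((1:ℝ), ⟨t, by omega⟩), ((-1:ℝ), ⟨d + t, by omega⟩), ((1:ℝ), ⟨2*d, by omega⟩),
           ((-1:ℝ), ⟨t+1, by omega⟩), ((1:ℝ), ⟨d+t+1, by omega⟩)]
        else
          [((1:ℝ), ⟨t+1, by omega⟩), ((-1:ℝ), ⟨d+t+1, by omega⟩), ((-1:ℝ), ⟨t, by omega⟩),
           ((1:ℝ), ⟨d+t, by omega⟩), ((1:ℝ), ⟨2*d+1, by omega⟩)])
      (fun _ => 0) (by omega) ?_
    intro x j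
    beta_reduce
    have e1 : HS t x ⟨t, by omega⟩ = relu (xv x t) := by
      simp [HS, show t < d by omega]
    have e2 : HS t x ⟨d + t, by omega⟩ = relu (-(xv x t)) := by
      simp [HS, show ¬(d + t < d) by omega, show d + t < 2*d by omega]
    have e3 : HS t x ⟨2*d, by omega⟩ = uu x t := by
      simp [HS, show ¬(2*d < d) by omega, show ¬(2*d < 2*d) by omega]
    have e4 : HS t x ⟨t+1, by omega⟩ = relu (xv x (t+1)) := by
      simp [HS, show t+1 < d by omega]
    have e5 : HS t x ⟨d+t+1, by omega⟩ = relu (-(xv x (t+1))) := by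
      simp [HS, show ¬(d + t + 1 < d) by omega, show d + t + 1 < 2*d by omega,
        show d + t + 1 - d = t + 1 by omega]
    have e6 : HS t x ⟨2*d+1, by omega⟩ = ww x t := by
      simp [HS, show ¬(2*d+1 < d) by omega, show ¬(2*d+1 < 2*d) by omega,
        show ¬(2*d+1 = 2*d) by omega]
    by_cases h1 : (j : ℕ) < 2 * d
    · rw [if_pos h1]
      by_cases h2 : (j : ℕ) < d
      · simp [HS, h1, h2, relu_relu]
      · simp [HS, h1, h2, relu_relu]
    · rw [if_neg h1]
      by_cases h2 : (j : ℕ) = 2 * d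
      · rw [if_pos h2]
        simp only [lin_cons, lin_nil, e1, e2, e3, e4, e5, e6]
        have : HS (t+1) x j = uu x (t+1) := by
          simp [HS, h2, show ¬(2*d < d) by omega, show ¬(2*d < 2*d) by omega]
        rw [this, uu]
        rw [show (1:ℝ) * relu (xv x t) + (-1 * relu (-xv x t) + (1 * uu x t +
          (-1 * relu (xv x (t+1)) + (1 * relu (-(xv x (t+1))) + 0)))) + 0
          = (relu (xv x t) - relu (-(xv x t))) + uu x t
            - (relu (xv x (t+1)) - relu (-(xv x (t+1)))) by ring]
        rw [relu_sub_relu_neg, relu_sub_relu_neg]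
      · rw [if_neg h2]
        simp only [lin_cons, lin_nil, e1, e2, e4, e5, e6]
        have : HS (t+1) x j = ww x (t+1) := by
          simp [HS, h2, show ¬((j:ℕ) < d) by omega, h1]
        rw [this, ww]
        rw [show (1:ℝ) * relu (xv x (t+1)) + (-1 * relu (-xv x (t+1)) + (-1 * relu (xv x t) +
          (1 * relu (-(xv x t)) + (1 * ww x t + 0)))) + 0
          = (relu (xv x (t+1)) - relu (-(xv x (t+1)))) - (relu (xv x t) - relu (-(xv x t))) + ww x t by ring]
        rw [relu_sub_relu_neg, relu_sub_relu_neg]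

end SpikeAux

namespace SpikeAux

variable {d : ℕ}

/-- state after layer d+1 -/
def HA (T : ℕ) (x : Fin d → ℝ) (j : Fin (2 * d + 3)) : ℝ :=
  if h : (j : ℕ) < 2 * d + 2 then HS T x ⟨j, h⟩ else relu (xv x T + uu x T)

def HB (T : ℕ) (x : Fin d → ℝ) (j : Fin (2 * d + 4)) : ℝ :=
  if h : (j : ℕ) < 2 * d + 3 then HA T x ⟨j, h⟩
  else relu (xv x T + uu x T + (xv x T - ww x T) - relu (xv x T + uu x T))

def zz (T : ℕ) (x : Fin d → ℝ) : ℝ :=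
  relu (1 + (xv x T - ww x T) - relu (xv x T + uu x T)
    - relu (xv x T + uu x T + (xv x T - ww x T) - relu (xv x T + uu x T)))

lemma HA_nonneg (T : ℕ) (x : Fin d → ℝ) (j : Fin (2 * d + 3)) : 0 ≤ HA T x j := by
  unfold HA; split_ifs
  · exact HS_nonneg _ _ _
  · exact relu_nonneg _

lemma zz_formula (A B : ℝ) :
    relu (1 + B - relu A - relu (A + B - relu A)) = max 0 (1 + min (B - A) (min B (-A))) := by
  have h1 : B - relu A = min B (B - A) := by
    have h := sub_relu_eq_min B (B - A)
    rw [show B - (B - A) = A by ring] at h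
    linarith
  have h2 := sub_relu_eq_min (min B (B - A)) (-A)
  rw [← h1] at h2
  rw [show B - relu A - -A = A + B - relu A by ring] at h2
  have e : 1 + B - relu A - relu (A + B - relu A) = 1 + min (min B (B - A)) (-A) := by
    rw [← h1, ← h2]; ring
  rw [e, relu, max_comm]
  congr 2
  rw [min_comm B (B - A), min_assoc]

lemma stack_full (m : ℕ) :
    IsHiddenStack IsSigma1 (m + 3) (12 + 2 * (m + 3)) ((m + 3) ^ 2 - (m + 3) + 1) 1
      (fun x _ => zz (m + 2) x) := by
  set d := m + 3 with hd
  have hd3 : 3 ≤ d := by omega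
  set T := m + 2 with hT
  have hTd : T < d := by omega
  have hchain := chain (d := d) (by omega) T hTd
  -- layer A
  have hA : IsHiddenStack IsSigma1 d (12 + 2 * d) (T + 2) (2 * d + 3) (fun x => HA T x) := by
    refine stack_layer hchain
      (fun j => if h : (j : ℕ) < 2 * d + 2 then [((1:ℝ), ⟨j, h⟩)]
        else [((1:ℝ), ⟨T, by omega⟩), ((-1:ℝ), ⟨d + T, by omega⟩), ((1:ℝ), ⟨2*d, by omega⟩)])
      (fun _ => 0) (by omega) ?_
    intro x j
    beta_reduce
    by_cases h : (j : ℕ) < 2 * d + 2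
    · rw [HA, dif_pos h, dif_pos h]
      simp only [lin_cons, lin_nil]
      rw [show (1:ℝ) * HS T x ⟨j, h⟩ + 0 + (fun _ => (0:ℝ)) j = HS T x ⟨j, h⟩ by simp]
      exact (relu_of_nonneg (HS_nonneg _ _ _)).symm
    · rw [HA, dif_neg h, dif_neg h]
      have e1 : HS T x ⟨T, by omega⟩ = relu (xv x T) := by
        simp [HS, show T < d by omega]
      have e2 : HS T x ⟨d + T, by omega⟩ = relu (-(xv x T)) := by
        simp [HS, show ¬(d + T < d) by omega, show d + T < 2*d by omega]
      have e3 : HS T x ⟨2*d, by omega⟩ = uu x T := by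
        simp [HS, show ¬(2*d < d) by omega, show ¬(2*d < 2*d) by omega]
      simp only [lin_cons, lin_nil, e1, e2, e3]
      rw [show (1:ℝ) * relu (xv x T) + (-1 * relu (-(xv x T)) + (1 * uu x T + 0)) + (fun _ => (0:ℝ)) j
        = (relu (xv x T) - relu (-(xv x T))) + uu x T by simp; ring]
      rw [relu_sub_relu_neg]
  -- layer B
  have hB : IsHiddenStack IsSigma1 d (12 + 2 * d) (T + 3) (2 * d + 4) (fun x => HB T x) := by
    refine stack_layer hA
      (fun j => if h : (j : ℕ) < 2 * d + 3 then [((1:ℝ), ⟨j, h⟩)]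
        else [((2:ℝ), ⟨T, by omega⟩), ((-2:ℝ), ⟨d + T, by omega⟩), ((1:ℝ), ⟨2*d, by omega⟩),
              ((-1:ℝ), ⟨2*d+1, by omega⟩), ((-1:ℝ), ⟨2*d+2, by omega⟩)])
      (fun _ => 0) (by omega) ?_
    intro x j
    beta_reduce
    by_cases h : (j : ℕ) < 2 * d + 3
    · rw [HB, dif_pos h, dif_pos h]
      simp only [lin_cons, lin_nil]
      rw [show (1:ℝ) * HA T x ⟨j, h⟩ + 0 + (fun _ => (0:ℝ)) j = HA T x ⟨j, h⟩ by simp]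
      exact (relu_of_nonneg (HA_nonneg _ _ _)).symm
    · rw [HB, dif_neg h, dif_neg h]
      have e1 : HA T x ⟨T, by omega⟩ = relu (xv x T) := by
        rw [HA, dif_pos (show T < 2*d+2 by omega)]
        simp [HS, show T < d by omega]
      have e2 : HA T x ⟨d + T, by omega⟩ = relu (-(xv x T)) := by
        rw [HA, dif_pos (show d + T < 2*d+2 by omega)]
        simp [HS, show ¬(d + T < d) by omega, show d + T < 2*d by omega]
      have e3 : HA T x ⟨2*d, by omega⟩ = uu x T := by
        rw [HA, dif_pos (show 2*d < 2*d+2 by omega)]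
        simp [HS, show ¬(2*d < d) by omega, show ¬(2*d < 2*d) by omega]
      have e4 : HA T x ⟨2*d+1, by omega⟩ = ww x T := by
        rw [HA, dif_pos (show 2*d+1 < 2*d+2 by omega)]
        simp [HS, show ¬(2*d+1 < d) by omega, show ¬(2*d+1 < 2*d) by omega,
          show ¬(2*d+1 = 2*d) by omega]
      have e5 : HA T x ⟨2*d+2, by omega⟩ = relu (xv x T + uu x T) := by
        rw [HA, dif_neg (show ¬(2*d+2 < 2*d+2) by omega)]
      simp only [lin_cons, lin_nil, e1, e2, e3, e4, e5]
      rw [show (2:ℝ) * relu (xv x T) + (-2 * relu (-(xv x T)) + (1 * uu x T +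
          (-1 * ww x T + (-1 * relu (xv x T + uu x T) + 0)))) + (fun _ => (0:ℝ)) j
        = 2 * (relu (xv x T) - relu (-(xv x T))) + uu x T - ww x T
          - relu (xv x T + uu x T) by simp; ring]
      rw [relu_sub_relu_neg]
      ring_nf
  -- layer C
  have hC : IsHiddenStack IsSigma1 d (12 + 2 * d) (T + 4) 1 (fun x _ => zz T x) := by
    refine stack_layer hB
      (fun _ => [((1:ℝ), ⟨T, by omega⟩), ((-1:ℝ), ⟨d + T, by omega⟩), ((-1:ℝ), ⟨2*d+1, by omega⟩),
                 ((-1:ℝ), ⟨2*d+2, by omega⟩), ((-1:ℝ), ⟨2*d+3, by omega⟩)])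
      (fun _ => 1) (by omega) ?_
    intro x j
    beta_reduce
    have eh : ∀ (n : ℕ) (hn : n < 2*d+3), HB T x ⟨n, by omega⟩ = HA T x ⟨n, hn⟩ := by
      intro n hn; rw [HB, dif_pos hn]
    have e1 : HB T x ⟨T, by omega⟩ = relu (xv x T) := by
      rw [eh T (by omega), HA, dif_pos (show T < 2*d+2 by omega)]
      simp [HS, show T < d by omega]
    have e2 : HB T x ⟨d + T, by omega⟩ = relu (-(xv x T)) := by
      rw [eh (d+T) (by omega), HA, dif_pos (show d + T < 2*d+2 by omega)]
      simp [HS, show ¬(d + T < d) by omega, show d + T < 2*d by omega]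
    have e4 : HB T x ⟨2*d+1, by omega⟩ = ww x T := by
      rw [eh (2*d+1) (by omega), HA, dif_pos (show 2*d+1 < 2*d+2 by omega)]
      simp [HS, show ¬(2*d+1 < d) by omega, show ¬(2*d+1 < 2*d) by omega,
        show ¬(2*d+1 = 2*d) by omega]
    have e5 : HB T x ⟨2*d+2, by omega⟩ = relu (xv x T + uu x T) := by
      rw [eh (2*d+2) (by omega), HA, dif_neg (show ¬(2*d+2 < 2*d+2) by omega)]
    have e6 : HB T x ⟨2*d+3, by omega⟩
        = relu (xv x T + uu x T + (xv x T - ww x T) - relu (xv x T + uu x T)) := by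
      rw [HB, dif_neg (show ¬(2*d+3 < 2*d+3) by omega)]
    simp only [lin_cons, lin_nil, e1, e2, e4, e5, e6]
    rw [zz]
    rw [show (1:ℝ) * relu (xv x T) + (-1 * relu (-(xv x T)) + (-1 * ww x T +
        (-1 * relu (xv x T + uu x T) +
         (-1 * relu (xv x T + uu x T + (xv x T - ww x T) - relu (xv x T + uu x T)) + 0))))
        + (fun _ => (1:ℝ)) j
      = (relu (xv x T) - relu (-(xv x T))) - ww x T - relu (xv x T + uu x T)
        - relu (xv x T + uu x T + (xv x T - ww x T) - relu (xv x T + uu x T)) + 1 by simp; ring]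
    rw [relu_sub_relu_neg]
    ring_nf
  -- padding
  have hz : ∀ x : Fin d → ℝ, 0 ≤ (fun x (_ : Fin 1) => zz T x) x 0 := fun x => relu_nonneg _
  have hpad := stack_pad hC (by omega) hz (m * m + 4 * m + 1)
  have harith : T + 4 + (m * m + 4 * m + 1) = (m + 3) ^ 2 - (m + 3) + 1 := by
    have h9 : (m + 3) ^ 2 = (m * m + 5 * m + 6) + (m + 3) := by ring
    rw [h9, Nat.add_sub_cancel, hT]
    ring
  rw [harith] at hpad
  exact hpad

end SpikeAux

namespace SpikeAux

lemma zz_eq_spike {d : ℕ} (hd : 0 < d) (T : ℕ) (hT : T = d - 1) (x : Fin d → ℝ) :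
    zz T x = spike d x := by
  have hmx := mx_eq x T
  have hmn := mn_eq x T
  have h1 : zz T x = max 0 (1 + min (mn x T - mx x T) (min (mn x T) (-(mx x T)))) := by
    rw [zz, hmx, hmn]
    exact zz_formula (mx x T) (mn x T)
  rw [h1]
  refine (spike_eq hd x (mx x T) (mn x T) ?_ ?_ ?_ ?_).symm
  · intro k
    have hk := k.isLt
    have : xv x (k : ℕ) = x k := by simp [xv, hk]
    rw [← this]
    exact mx_ge x T k (by omega)
  · obtain ⟨j, hj, he⟩ := mx_mem x T
    refine ⟨⟨j, by omega⟩, ?_⟩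
    rw [he]
    simp [xv, show j < d by omega]
  · intro k
    have hk := k.isLt
    have : xv x (k : ℕ) = x k := by simp [xv, hk]
    rw [← this]
    exact mn_le x T k (by omega)
  · obtain ⟨j, hj, he⟩ := mn_mem x T
    refine ⟨⟨j, by omega⟩, ?_⟩
    rw [he]
    simp [xv, show j < d by omega]

lemma main_ge3 (m : ℕ) :
    ∃ Φ : (Fin (m + 3) → ℝ) → ℝ,
      IsNN IsSigma1 (m + 3) (12 + 2 * (m + 3)) ((m + 3) ^ 2 - (m + 3) + 1) Φ ∧
      ∀ x, Φ x = spike (m + 3) x := by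
  refine ⟨fun x => zz (m + 2) x, ⟨1, fun x _ => zz (m + 2) x, fun _ => 1, 0,
    stack_full m, fun x => ?_⟩, fun x => zz_eq_spike (by omega) (m + 2) (by omega) x⟩
  simp

end SpikeAux

namespace SpikeAux

lemma d1_formula (t : ℝ) :
    relu (t + 1) - 2 * relu t + relu (t - 1) = max 0 (1 + min (t - t) (min t (-t))) := by
  rw [show t - t = 0 by ring]
  unfold relu
  rcases le_total t 0 with h | h
  · rw [min_eq_left (show t ≤ -t by linarith), min_eq_right h,
      max_eq_right h, max_eq_right (show t - 1 ≤ 0 by linarith)]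
    rcases le_total (t + 1) 0 with h2 | h2
    · rw [max_eq_right h2, max_eq_left (show 1 + t ≤ 0 by linarith)]; ring
    · rw [max_eq_left h2, max_eq_right (show 0 ≤ 1 + t by linarith)]; ring
  · rw [min_eq_right (show -t ≤ t by linarith), min_eq_right (show -t ≤ 0 by linarith),
      max_eq_left h, max_eq_left (show 0 ≤ t + 1 by linarith)]
    rcases le_total (t - 1) 0 with h2 | h2
    · rw [max_eq_right h2, max_eq_right (show 0 ≤ 1 + -t by linarith)]; ring
    · rw [max_eq_left h2, max_eq_left (show 1 + -t ≤ 0 by linarith)]; ring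

def h1d1 (x : Fin 1 → ℝ) (j : Fin 3) : ℝ :=
  if (j : ℕ) = 0 then relu (x 0 + 1) else if (j : ℕ) = 1 then relu (x 0) else relu (x 0 - 1)

lemma main_d1 :
    ∃ Φ : (Fin 1 → ℝ) → ℝ,
      IsNN IsSigma1 1 (12 + 2 * 1) (1 ^ 2 - 1 + 1) Φ ∧
      ∀ x, Φ x = spike 1 x := by
  have hstack : IsHiddenStack IsSigma1 1 (12 + 2 * 1) 1 3 h1d1 := by
    refine stack_layer IsHiddenStack.zero (fun _ => [((1:ℝ), 0)])
      (fun j => if (j : ℕ) = 0 then 1 else if (j : ℕ) = 1 then 0 else -1) (by omega) ?_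
    intro x j
    fin_cases j <;> simp [h1d1] <;> ring_nf
  refine ⟨fun x => relu (x 0 + 1) - 2 * relu (x 0) + relu (x 0 - 1),
    ⟨3, h1d1, fun j => if (j : ℕ) = 0 then 1 else if (j : ℕ) = 1 then -2 else 1, 0,
      hstack, fun x => ?_⟩, fun x => ?_⟩
  · rw [Fin.sum_univ_three]
    simp [h1d1]
    ring
  · have ha : ∀ k : Fin 1, x k ≤ x 0 := by
      intro k; rw [Subsingleton.elim k 0]
    have hb : ∀ k : Fin 1, x 0 ≤ x k := by
      intro k; rw [Subsingleton.elim k 0]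
    rw [spike_eq one_pos x (x 0) (x 0) ha ⟨0, rfl⟩ hb ⟨0, rfl⟩]
    exact d1_formula (x 0)

end SpikeAux

namespace SpikeAux

def hatn (y : ℝ) : ℝ := relu (y + 1) - 2 * relu y + relu (y - 1)

lemma relu_min (a b : ℝ) : relu (min a b) = min (relu a) (relu b) := by
  rcases le_total a b with h | h
  · rw [min_eq_left h, min_eq_left (by unfold relu; exact max_le_max h (le_refl 0))]
  · rw [min_eq_right h, min_eq_right (by unfold relu; exact max_le_max h (le_refl 0))]

lemma hatn_eq (y : ℝ) : hatn y = relu (min (1 + y) (1 - y)) := by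
  unfold hatn relu
  rcases le_total y 0 with h | h
  · rw [min_eq_left (by linarith), max_eq_right h, max_eq_right (show y - 1 ≤ 0 by linarith)]
    rcases le_total (y + 1) 0 with h2 | h2
    · rw [max_eq_right h2, max_eq_right (show 1 + y ≤ 0 by linarith)]; ring
    · rw [max_eq_left h2, max_eq_left (show 0 ≤ 1 + y by linarith)]; ring
  · rw [min_eq_right (by linarith), max_eq_left h, max_eq_left (show 0 ≤ y + 1 by linarith)]
    rcases le_total (y - 1) 0 with h2 | h2
    · rw [max_eq_right h2, max_eq_left (show 0 ≤ 1 - y by linarith)]; ring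
    · rw [max_eq_left h2, max_eq_right (show 1 - y ≤ 0 by linarith)]; ring

lemma min_sub_max (p q : ℝ) : min p q - max p q = min (p - q) (q - p) := by
  rcases le_total p q with h | h
  · rw [min_eq_left h, max_eq_right h, min_eq_left (by linarith)]
  · rw [min_eq_right h, max_eq_left h, min_eq_right (by linarith)]

lemma d2_formula (p q : ℝ) :
    relu (min (min (min (1+p) (1-p)) (min (1+q) (1-q))) (min (1+(p-q)) (1-(p-q))))
      = max 0 (1 + min (min p q - max p q) (min (min p q) (-max p q))) := by
  rw [relu, max_comm]
  congr 1
  rw [min_sub_max]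
  rw [show -max p q = min (-p) (-q) from (min_neg_neg p q).symm]
  rw [show min p q = min p q from rfl]
  rw [← min_add_add_left, ← min_add_add_left, ← min_add_add_left, ← min_add_add_left,
    ← min_add_add_left]
  rw [show (1:ℝ) + (p - q) = 1 + (p-q) from rfl]
  ring_nf
  simp [min_comm, min_assoc, min_left_comm]

end SpikeAux

namespace SpikeAux

def bse (x : Fin 2 → ℝ) (g : ℕ) : ℝ := if g = 0 then x 0 else if g = 1 then x 1 else x 0 - x 1
def offv (e : ℕ) : ℝ := if e = 0 then 1 else if e = 1 then 0 else -1

def h1d2 (x : Fin 2 → ℝ) (j : Fin 9) : ℝ := relu (bse x ((j : ℕ) / 3) + offv ((j : ℕ) % 3))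

def r1d2 (x : Fin 2 → ℝ) : ℝ := relu (hatn (x 0) - hatn (x 1))

def h2d2 (x : Fin 2 → ℝ) (j : Fin 10) : ℝ :=
  if h : (j : ℕ) < 9 then h1d2 x ⟨j, h⟩ else r1d2 x

def r2d2 (x : Fin 2 → ℝ) : ℝ := relu (hatn (x 0) - r1d2 x - hatn (x 0 - x 1))

def h3d2 (x : Fin 2 → ℝ) (j : Fin 11) : ℝ :=
  if h : (j : ℕ) < 10 then h2d2 x ⟨j, h⟩ else r2d2 x

lemma h2d2_nonneg (x : Fin 2 → ℝ) (j : Fin 10) : 0 ≤ h2d2 x j := by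
  unfold h2d2; split_ifs
  · exact relu_nonneg _
  · exact relu_nonneg _

lemma stack1_d2 : IsHiddenStack IsSigma1 2 (12 + 2 * 2) 1 9 h1d2 := by
  refine stack_layer IsHiddenStack.zero
    (fun j => if (j : ℕ) < 3 then [((1:ℝ), (0 : Fin 2))]
      else if (j : ℕ) < 6 then [((1:ℝ), (1 : Fin 2))] else [((1:ℝ), 0), ((-1:ℝ), 1)])
    (fun j => offv ((j : ℕ) % 3)) (by omega) ?_
  intro x j
  fin_cases j <;> norm_num [h1d2, bse, offv, lin, sub_eq_add_neg]

lemma stack2_d2 : IsHiddenStack IsSigma1 2 (12 + 2 * 2) 2 10 h2d2 := by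
  refine stack_layer stack1_d2
    (fun j => if h : (j : ℕ) < 9 then [((1:ℝ), ⟨j, h⟩)]
      else [((1:ℝ), ⟨0, by omega⟩), ((-2:ℝ), ⟨1, by omega⟩), ((1:ℝ), ⟨2, by omega⟩), ((-1:ℝ), ⟨3, by omega⟩), ((2:ℝ), ⟨4, by omega⟩), ((-1:ℝ), ⟨5, by omega⟩)])
    (fun _ => 0) (by omega) ?_
  intro x j
  beta_reduce
  by_cases h : (j : ℕ) < 9
  · rw [h2d2, dif_pos h, dif_pos h]
    simp [lin, h1d2, relu_relu]
  · rw [h2d2, dif_neg h, dif_neg h]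
    norm_num [lin, h1d2, r1d2, hatn, bse, offv]
    ring_nf
lemma stack3_d2 : IsHiddenStack IsSigma1 2 (12 + 2 * 2) 3 11 h3d2 := by
  refine stack_layer stack2_d2
    (fun j => if h : (j : ℕ) < 10 then [((1:ℝ), ⟨j, h⟩)]
      else [((1:ℝ), ⟨0, by omega⟩), ((-2:ℝ), ⟨1, by omega⟩), ((1:ℝ), ⟨2, by omega⟩), ((-1:ℝ), ⟨9, by omega⟩), ((-1:ℝ), ⟨6, by omega⟩), ((2:ℝ), ⟨7, by omega⟩), ((-1:ℝ), ⟨8, by omega⟩)])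
    (fun _ => 0) (by omega) ?_
  intro x j
  beta_reduce
  by_cases h : (j : ℕ) < 10
  · rw [h3d2, dif_pos h, dif_pos h]
    simp [lin, relu_of_nonneg (h2d2_nonneg x _)]
  · rw [h3d2, dif_neg h, dif_neg h]
    norm_num [lin, h2d2, h1d2, r2d2, r1d2, hatn, bse, offv]
    ring_nf

lemma main_d2 :
    ∃ Φ : (Fin 2 → ℝ) → ℝ,
      IsNN IsSigma1 2 (12 + 2 * 2) (2 ^ 2 - 2 + 1) Φ ∧
      ∀ x, Φ x = spike 2 x := by
  refine ⟨fun x => hatn (x 0) - r1d2 x - r2d2 x,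
    ⟨11, h3d2,
      fun j => if (j : ℕ) = 0 then 1 else if (j : ℕ) = 1 then -2 else if (j : ℕ) = 2 then 1
        else if (j : ℕ) = 9 then -1 else if (j : ℕ) = 10 then -1 else 0, 0,
      by norm_num; exact stack3_d2, fun x => ?_⟩, fun x => ?_⟩
  · norm_num [Fin.sum_univ_succ, h3d2, h2d2, h1d2, r1d2, r2d2, bse, offv, hatn]
    ring_nf
  · -- value equality
    show hatn (x 0) - r1d2 x - r2d2 x = spike 2 x
    have e1 : hatn (x 0) - r1d2 x = min (hatn (x 0)) (hatn (x 1)) := by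
      rw [r1d2]; exact sub_relu_eq_min _ _
    have e2 : (hatn (x 0) - r1d2 x) - relu ((hatn (x 0) - r1d2 x) - hatn (x 0 - x 1))
        = min (hatn (x 0) - r1d2 x) (hatn (x 0 - x 1)) := sub_relu_eq_min _ _
    have e3 : hatn (x 0) - r1d2 x - r2d2 x
        = min (min (hatn (x 0)) (hatn (x 1))) (hatn (x 0 - x 1)) := by
      rw [← e1, ← e2, r2d2]
    rw [e3, hatn_eq, hatn_eq, hatn_eq, ← relu_min, ← relu_min]
    have ha : ∀ k : Fin 2, x k ≤ max (x 0) (x 1) := by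
      intro k; fin_cases k
      · exact le_max_left _ _
      · exact le_max_right _ _
    have hb : ∀ k : Fin 2, min (x 0) (x 1) ≤ x k := by
      intro k; fin_cases k
      · exact min_le_left _ _
      · exact min_le_right _ _
    have ha' : ∃ k : Fin 2, x k = max (x 0) (x 1) := by
      rcases le_total (x 0) (x 1) with h | h
      · exact ⟨1, (max_eq_right h).symm⟩
      · exact ⟨0, (max_eq_left h).symm⟩
    have hb' : ∃ k : Fin 2, x k = min (x 0) (x 1) := by
      rcases le_total (x 0) (x 1) with h | h
      · exact ⟨0, (min_eq_left h).symm⟩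
      · exact ⟨1, (min_eq_right h).symm⟩
    rw [spike_eq two_pos x (max (x 0) (x 1)) (min (x 0) (x 1)) ha ha' hb hb']
    exact d2_formula (x 0) (x 1)

end SpikeAux


/-- the spike function on `ℝ^d` is exactly representable by a σ₁-NN of
width `12 + 2d` and depth `d² − d + 1`. -/
theorem spike_exact_sigma1_nn (d : ℕ) (hd : 0 < d) :
    ∃ Φ : (Fin d → ℝ) → ℝ,
      IsNN IsSigma1 d (12 + 2 * d) (d ^ 2 - d + 1) Φ ∧
      ∀ x : Fin d → ℝ, Φ x = spike d x := by
  match d, hd with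
  | 1, _ => exact SpikeAux.main_d1
  | 2, _ => exact SpikeAux.main_d2
  | (m + 3), _ => exact SpikeAux.main_ge3 m
end
end
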